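/- Let B = [b_{i₁,…,i_d}] ∈ ℝ₊^{m₁×⋯×m_d} (d ≥ 2, each m_j ≥ 2) be a nonnegative tensor with no zero slice, and let s_k ∈ ℝ^{m_k}, k ∈ [d], be positive vectors satisfying the compatibility condition. Let f̃ be the restriction of f̂ to U(s₁,…,s_d), with block gradients ∇_j f̃ ∈ L(s_j), and let f be the restriction of f̃ to V₀(s₁,…,s_d)^⊥, with gradient ∇f(x) ∈ V₀(s₁,…,s_d)^⊥. Let P₀ be the orthogonal projection of U(s₁,…,s_d) onto V₀(s₁,…,s_d)^⊥, W_j = P₀({(0,x_j) : x_j ∈ L(s_j)}), and let ∇_{W_j} f(x) denote the orthogonal projection of ∇f(x) onto W_j. Then for every x ∈ V₀(s₁,…,s_d)^⊥ and j ∈ [d]: ‖∇_j f̃(x)‖ ≤ ‖∇_{W_j} f(x)‖, and consequently ‖∇f(x)‖² ≤ ∑_{j=1}^d ‖∇_{W_j} f(x)‖². -/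

import Mathlib

section

variable {d : ℕ} {m : Fin d → ℕ}

/-- The subspace `U(s₁,…,s_d) = {x : sₖᵀxₖ = 0 for all k}` of
`ℝ^{m₁} × ⋯ × ℝ^{m_d}`, realized inside `EuclideanSpace ℝ ((k : Fin d) × Fin (m k))`. -/
noncomputable def Usub (s : (k : Fin d) → Fin (m k) → ℝ) :
    Submodule ℝ (EuclideanSpace ℝ ((k : Fin d) × Fin (m k))) where
  carrier := {x | ∀ k : Fin d, ∑ i : Fin (m k), s k i * x ⟨k, i⟩ = 0}
  add_mem' := by
    intro a b ha hb k
    simp only [PiLp.add_apply, mul_add, Finset.sum_add_distrib, ha k, hb k, add_zero]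
  zero_mem' := by intro k; simp
  smul_mem' := by
    intro c a ha k
    have : ∀ i : Fin (m k), s k i * (c • a) ⟨k, i⟩ = c * (s k i * a ⟨k, i⟩) := by
      intro i; simp [PiLp.smul_apply, smul_eq_mul]; ring
    simp only [this, ← Finset.mul_sum, ha k, mul_zero]

/-- The subspace `V(s₁,…,s_d) = {x : x₁(i₁) + ⋯ + x_d(i_d) = 0 whenever B i > 0}`. -/
noncomputable def Vsub (B : ((j : Fin d) → Fin (m j)) → ℝ) :
    Submodule ℝ (EuclideanSpace ℝ ((k : Fin d) × Fin (m k))) where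
  carrier := {x | ∀ i : (j : Fin d) → Fin (m j), 0 < B i → ∑ k : Fin d, x ⟨k, i k⟩ = 0}
  add_mem' := by
    intro a b ha hb i hi
    simp only [PiLp.add_apply, Finset.sum_add_distrib, ha i hi, hb i hi, add_zero]
  zero_mem' := by intro i _; simp
  smul_mem' := by
    intro c a ha i hi
    have : ∀ k : Fin d, (c • a) ⟨k, i k⟩ = c * a ⟨k, i k⟩ := by
      intro k; simp [PiLp.smul_apply, smul_eq_mul]
    simp only [this, ← Finset.mul_sum, ha i hi, mul_zero]

/-- The orthogonal complement `V₀(s₁,…,s_d)^⊥` of `V₀ = V ∩ U` inside `U`. -/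
noncomputable def V0perp (B : ((j : Fin d) → Fin (m j)) → ℝ)
    (s : (k : Fin d) → Fin (m k) → ℝ) :
    Submodule ℝ (EuclideanSpace ℝ ((k : Fin d) × Fin (m k))) :=
  Usub s ⊓ (Vsub B ⊓ Usub s)ᗮ

/-- The copy of `L(s_j)` inside `U(s₁,…,s_d)`: vectors supported on the `j`-th block
whose `j`-th block lies in `L(s_j) = {x_j : s_jᵀx_j = 0}`. -/
noncomputable def Lblock (s : (k : Fin d) → Fin (m k) → ℝ) (j : Fin d) :
    Submodule ℝ (EuclideanSpace ℝ ((k : Fin d) × Fin (m k))) where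
  carrier := {x | (∑ i : Fin (m j), s j i * x ⟨j, i⟩ = 0) ∧
    ∀ p : (k : Fin d) × Fin (m k), p.1 ≠ j → x p = 0}
  add_mem' := by
    intro a b ha hb
    refine ⟨?_, ?_⟩
    · simp only [PiLp.add_apply, mul_add, Finset.sum_add_distrib, ha.1, hb.1, add_zero]
    · intro p hp; simp [PiLp.add_apply, ha.2 p hp, hb.2 p hp]
  zero_mem' := ⟨by simp, by intro p _; simp⟩
  smul_mem' := by
    intro c a ha
    refine ⟨?_, ?_⟩
    · have : ∀ i : Fin (m j), s j i * (c • a) ⟨j, i⟩ = c * (s j i * a ⟨j, i⟩) := by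
        intro i; simp [PiLp.smul_apply, smul_eq_mul]; ring
      simp only [this, ← Finset.mul_sum, ha.1, mul_zero]
    · intro p hp; simp [PiLp.smul_apply, ha.2 p hp]

/-- The orthogonal projection of the ambient space onto `V₀(s₁,…,s_d)^⊥`, as a linear
map into the ambient space. -/
noncomputable def P0 (B : ((j : Fin d) → Fin (m j)) → ℝ)
    (s : (k : Fin d) → Fin (m k) → ℝ) :
    EuclideanSpace ℝ ((k : Fin d) × Fin (m k)) →ₗ[ℝ]
      EuclideanSpace ℝ ((k : Fin d) × Fin (m k)) :=
  (V0perp B s).subtype ∘ₗ (Submodule.orthogonalProjectionOnto (V0perp B s)).toLinearMap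

/-- The subspace `W_j = P₀({(0, x_j) : x_j ∈ L(s_j)}) ⊆ V₀(s₁,…,s_d)^⊥`. -/
noncomputable def Wsub (B : ((j : Fin d) → Fin (m j)) → ℝ)
    (s : (k : Fin d) → Fin (m k) → ℝ) (j : Fin d) :
    Submodule ℝ (EuclideanSpace ℝ ((k : Fin d) × Fin (m k))) :=
  Submodule.map (P0 B s) (Lblock s j)

/-- The function `f̂(x) = ∑_i B i · exp(x₁(i₁) + ⋯ + x_d(i_d))`. -/
noncomputable def fhat (B : ((j : Fin d) → Fin (m j)) → ℝ)
    (y : EuclideanSpace ℝ ((k : Fin d) × Fin (m k))) : ℝ :=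
  ∑ i : (j : Fin d) → Fin (m j), B i * Real.exp (∑ k : Fin d, y ⟨k, i k⟩)

/-!
Along any `v ∈ V` the derivative `∑ᵢ bᵢ e^{x_{1,i₁}+⋯+x_{d,i_d}} (v_{1,i₁}+⋯+v_{d,i_d})` of `f̂` vanishes
term by term, since `bᵢ ≥ 0` and `v` kills the multi-indices with `bᵢ > 0`; so `g = ∇f̂(x)` is
orthogonal to `V₀`. For `u ∈ L(s_j)` the part `u - P₀u` lies in `V₀`, hence with `u = ∇_j f̃(x)`
  `‖u‖² = ⟪g, u⟫ = ⟪g, P₀u⟫ = ⟪∇f(x), P₀u⟫ = ⟪∇_{W_j} f(x), P₀u⟫ ≤ ‖∇_{W_j} f(x)‖ ‖u‖`,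
as `P₀u ∈ W_j`. For the second bound, the blocks `L(s_j)` are mutually orthogonal and span
`U ⊇ V₀^⊥`, so `‖∇f(x)‖² ≤ ∑_j ‖∇_j f̃(x)‖²`, and the first bound applies termwise.
-/

open scoped InnerProductSpace RealInnerProductSpace

namespace Submodule

variable {𝕜 F : Type*} [RCLike 𝕜] [NormedAddCommGroup F] [InnerProductSpace 𝕜 F]

theorem inner_starProjection_right_of_mem {M : Submodule 𝕜 F} [M.HasOrthogonalProjection]
    {p : F} (hp : p ∈ M) (v : F) : ⟪p, M.starProjection v⟫_𝕜 = ⟪p, v⟫_𝕜 := by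
  rw [← inner_starProjection_left_eq_right, starProjection_eq_self_iff.2 hp]

theorem sub_starProjection_inf_orthogonal_mem {N U : Submodule 𝕜 F} [N.HasOrthogonalProjection]
    [(U ⊓ Nᗮ).HasOrthogonalProjection] (hNU : N ≤ U) {u : F} (hu : u ∈ U) :
    u - (U ⊓ Nᗮ).starProjection u ∈ N := by
  rw [← sup_orthogonal_inf_of_hasOrthogonalProjection hNU] at hu
  obtain ⟨n, hn, k, hk, rfl⟩ := mem_sup.1 hu
  have hn' : n ∈ (U ⊓ Nᗮ)ᗮ := orthogonal_le inf_le_right (le_orthogonal_orthogonal N hn)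
  have hk' : k ∈ U ⊓ Nᗮ := ⟨hk.2, hk.1⟩
  rwa [map_add, (starProjection_apply_eq_zero_iff _).2 hn', starProjection_eq_self_iff.2 hk',
    zero_add, add_sub_cancel_right]

theorem norm_orthogonalProjectionOnto_le_of_inner_sub_starProjection_eq_zero
    {K L : Submodule 𝕜 F} [K.HasOrthogonalProjection] [L.HasOrthogonalProjection]
    [(L.map (K.starProjection : F →ₗ[𝕜] F)).HasOrthogonalProjection] {g : F}
    (hg : ∀ u ∈ L, ⟪u - K.starProjection u, g⟫_𝕜 = 0) :
    ‖L.orthogonalProjectionOnto g‖ ≤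
      ‖(L.map (K.starProjection : F →ₗ[𝕜] F)).orthogonalProjectionOnto
        (K.starProjection g)‖ := by
  set W := L.map (K.starProjection : F →ₗ[𝕜] F)
  set u := L.starProjection g
  set p := K.starProjection u
  set w := W.starProjection (K.starProjection g)
  have hpW : p ∈ W := mem_map_of_mem (L.starProjection_apply_mem g)
  have hpK : p ∈ K := K.starProjection_apply_mem u
  have hup : ⟪u, g⟫_𝕜 = ⟪p, g⟫_𝕜 :=
    sub_eq_zero.1 (by rw [← inner_sub_left]; exact hg u (L.starProjection_apply_mem g))
  have key : ‖L.orthogonalProjectionOnto g‖ ^ 2 = RCLike.re ⟪p, w⟫_𝕜 := by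
    rw [← re_inner_starProjection_eq_normSq, hup, inner_starProjection_right_of_mem hpW,
      inner_starProjection_right_of_mem hpK]
  have hpu : ‖p‖ ≤ ‖u‖ := K.norm_starProjection_apply_le u
  have hcs : RCLike.re ⟪p, w⟫_𝕜 ≤ ‖p‖ * ‖w‖ := re_inner_le_norm p w
  change ‖u‖ ≤ ‖w‖
  change ‖u‖ ^ 2 = _ at key
  nlinarith [norm_nonneg u, norm_nonneg w, norm_nonneg p]

theorem norm_sq_orthogonalProjectionOnto_le_sum_of_le_iSup {ι : Type*} [Fintype ι]
    {L : ι → Submodule 𝕜 F} [∀ i, CompleteSpace (L i)]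
    (hL : OrthogonalFamily 𝕜 (fun i => L i) fun i => (L i).subtypeₗᵢ)
    {K : Submodule 𝕜 F} [K.HasOrthogonalProjection] (hK : K ≤ ⨆ i, L i) (g : F) :
    ‖K.orthogonalProjectionOnto g‖ ^ 2 ≤ ∑ i, ‖(L i).orthogonalProjectionOnto g‖ ^ 2 := by
  set q := ∑ i, (L i).starProjection g
  have hq : ‖q‖ ^ 2 = ∑ i, ‖(L i).orthogonalProjectionOnto g‖ ^ 2 :=
    hL.norm_sum (fun i => (L i).orthogonalProjectionOnto g) Finset.univ
  have hsum : ∑ i, (L i).starProjection (K.starProjection g) = K.starProjection g :=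
    hL.sum_projection_of_mem_iSup _ (hK (K.starProjection_apply_mem g))
  have key : ‖K.orthogonalProjectionOnto g‖ ^ 2 = RCLike.re ⟪K.starProjection g, q⟫_𝕜 := by
    rw [← re_inner_starProjection_eq_normSq, inner_sum]
    simp_rw [← inner_starProjection_left_eq_right]
    rw [← sum_inner, hsum]
  have hcs : RCLike.re ⟪K.starProjection g, q⟫_𝕜 ≤ ‖K.starProjection g‖ * ‖q‖ :=
    re_inner_le_norm _ _
  change ‖K.starProjection g‖ ^ 2 = _ at key
  change ‖K.starProjection g‖ ^ 2 ≤ _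
  rw [← hq]
  nlinarith [norm_nonneg q, norm_nonneg (K.starProjection g)]

end Submodule

noncomputable def multiIndexSum (i : (j : Fin d) → Fin (m j)) :
    EuclideanSpace ℝ ((k : Fin d) × Fin (m k)) →L[ℝ] ℝ :=
  ∑ k : Fin d, EuclideanSpace.proj (⟨k, i k⟩ : (k : Fin d) × Fin (m k))

theorem multiIndexSum_apply (i : (j : Fin d) → Fin (m j))
    (y : EuclideanSpace ℝ ((k : Fin d) × Fin (m k))) :
    multiIndexSum i y = ∑ k : Fin d, y ⟨k, i k⟩ := by
  simp [multiIndexSum]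

theorem hasFDerivAt_fhat (B : ((j : Fin d) → Fin (m j)) → ℝ)
    (x : EuclideanSpace ℝ ((k : Fin d) × Fin (m k))) :
    HasFDerivAt (fhat B)
      (∑ i, (B i * Real.exp (multiIndexSum i x)) • multiIndexSum i) x := by
  have hfhat : fhat B = fun y => ∑ i, B i * Real.exp (multiIndexSum i y) := by
    funext y; simp only [fhat, multiIndexSum_apply]
  rw [hfhat]
  refine HasFDerivAt.fun_sum fun i _ => ?_
  simpa [smul_smul] using ((multiIndexSum i).hasFDerivAt (x := x)).exp.const_mul (B i)

theorem inner_gradient_fhat (B : ((j : Fin d) → Fin (m j)) → ℝ)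
    (x v : EuclideanSpace ℝ ((k : Fin d) × Fin (m k))) :
    ⟪gradient (fhat B) x, v⟫ =
      ∑ i, B i * Real.exp (multiIndexSum i x) * multiIndexSum i v := by
  rw [gradient, InnerProductSpace.toDual_symm_apply, (hasFDerivAt_fhat B x).fderiv]
  simp [mul_assoc]

theorem gradient_fhat_mem_orthogonal_Vsub {B : ((j : Fin d) → Fin (m j)) → ℝ}
    (hB : ∀ i, 0 ≤ B i) (x : EuclideanSpace ℝ ((k : Fin d) × Fin (m k))) :
    gradient (fhat B) x ∈ (Vsub B)ᗮ := by
  rw [Submodule.mem_orthogonal']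
  intro v hv
  rw [inner_gradient_fhat]
  refine Finset.sum_eq_zero fun i _ => ?_
  rcases (hB i).eq_or_lt with hBi | hBi
  · rw [← hBi, zero_mul, zero_mul]
  · rw [multiIndexSum_apply i v, hv i hBi, mul_zero]

section Blocks

variable (s : (k : Fin d) → Fin (m k) → ℝ)

theorem Lblock_le_Usub (j : Fin d) : Lblock s j ≤ Usub s := by
  intro x hx k
  by_cases hk : k = j
  · subst hk; exact hx.1
  · exact Finset.sum_eq_zero fun i _ => by rw [hx.2 ⟨k, i⟩ hk, mul_zero]

theorem orthogonalFamily_Lblock :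
    OrthogonalFamily ℝ (fun j => Lblock s j) fun j => (Lblock s j).subtypeₗᵢ := by
  refine orthogonalFamily_iff_pairwise.2 fun j j' hjj' a ha b hb => ?_
  rw [PiLp.inner_apply]
  refine Finset.sum_eq_zero fun p _ => ?_
  by_cases hp : p.1 = j
  · rw [hb.2 p (hp ▸ hjj'), inner_zero_left]
  · rw [ha.2 p hp, inner_zero_right]

noncomputable def blockRestrict (j : Fin d) (x : EuclideanSpace ℝ ((k : Fin d) × Fin (m k))) :
    EuclideanSpace ℝ ((k : Fin d) × Fin (m k)) :=
  WithLp.toLp 2 fun p => if p.1 = j then x p else 0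

theorem sum_blockRestrict (x : EuclideanSpace ℝ ((k : Fin d) × Fin (m k))) :
    ∑ j, blockRestrict j x = x := by
  ext p
  rw [WithLp.ofLp_sum, Finset.sum_apply p Finset.univ fun j => (blockRestrict j x).ofLp]
  simp [blockRestrict]

theorem blockRestrict_mem_Lblock {x : EuclideanSpace ℝ ((k : Fin d) × Fin (m k))}
    (hx : x ∈ Usub s) (j : Fin d) : blockRestrict j x ∈ Lblock s j := by
  refine ⟨?_, fun p hp => if_neg hp⟩
  simpa [blockRestrict] using hx j

theorem Usub_le_iSup_Lblock : Usub s ≤ ⨆ j, Lblock s j := fun x hx =>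
  sum_blockRestrict x ▸ Submodule.sum_mem_iSup (blockRestrict_mem_Lblock s hx)

end Blocks

theorem block_gradient_bounds_general {d : ℕ} {m : Fin d → ℕ}
    (B : ((j : Fin d) → Fin (m j)) → ℝ)
    (hB : ∀ i, 0 ≤ B i)
    (s : (k : Fin d) → Fin (m k) → ℝ) :
    ∀ x ∈ V0perp B s,
      (∀ j : Fin d,
        ‖Submodule.orthogonalProjectionOnto (Lblock s j) (gradient (fhat B) x)‖ ≤
          ‖Submodule.orthogonalProjectionOnto (Wsub B s j)
            ((Submodule.orthogonalProjectionOnto (V0perp B s) (gradient (fhat B) x) :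
              EuclideanSpace ℝ ((k : Fin d) × Fin (m k))))‖) ∧
      ‖(Submodule.orthogonalProjectionOnto (V0perp B s) (gradient (fhat B) x) :
            EuclideanSpace ℝ ((k : Fin d) × Fin (m k)))‖ ^ 2 ≤
        ∑ j : Fin d,
          ‖Submodule.orthogonalProjectionOnto (Wsub B s j)
            ((Submodule.orthogonalProjectionOnto (V0perp B s) (gradient (fhat B) x) :
              EuclideanSpace ℝ ((k : Fin d) × Fin (m k))))‖ ^ 2 := by
  intro x _
  have hg : gradient (fhat B) x ∈ (Vsub B ⊓ Usub s)ᗮ :=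
    Submodule.orthogonal_le inf_le_left (gradient_fhat_mem_orthogonal_Vsub hB x)
  have hblock (j : Fin d) :
      ‖(Lblock s j).orthogonalProjectionOnto (gradient (fhat B) x)‖ ≤
        ‖(Wsub B s j).orthogonalProjectionOnto
          ((V0perp B s).starProjection (gradient (fhat B) x))‖ :=
    Submodule.norm_orthogonalProjectionOnto_le_of_inner_sub_starProjection_eq_zero
      fun _ hu => hg _ (Submodule.sub_starProjection_inf_orthogonal_mem inf_le_right
        (Lblock_le_Usub s j hu))
  refine ⟨hblock, ?_⟩
  calc _ ≤ ∑ j, ‖(Lblock s j).orthogonalProjectionOnto (gradient (fhat B) x)‖ ^ 2 :=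
        Submodule.norm_sq_orthogonalProjectionOnto_le_sum_of_le_iSup (orthogonalFamily_Lblock s)
          (inf_le_left.trans (Usub_le_iSup_Lblock s)) _
    _ ≤ _ := Finset.sum_le_sum fun j _ => pow_le_pow_left₀ (norm_nonneg _) (hblock j) 2

/-- Lemma 4.1 (3) of the paper. For every `x ∈ V₀(s₁,…,s_d)^⊥` and
`j ∈ [d]`, `‖∇_j f̃(x)‖ ≤ ‖∇_{W_j} f(x)‖`, and consequently
`‖∇f(x)‖² ≤ ∑_{j=1}^d ‖∇_{W_j} f(x)‖²`.  Here `∇_j f̃(x)` is the orthogonal projection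
of the gradient of `f̂` at `x` onto the block subspace `{(0,x_j) : x_j ∈ L(s_j)}`,
`∇f(x)` its orthogonal projection onto `V₀^⊥`, and `∇_{W_j} f(x)` the orthogonal
projection of `∇f(x)` onto `W_j`. -/
theorem block_gradient_bounds {d : ℕ} {m : Fin d → ℕ} (hd : 2 ≤ d)
    (hm : ∀ j, 2 ≤ m j)
    (B : ((j : Fin d) → Fin (m j)) → ℝ)
    (hB : ∀ i, 0 ≤ B i)
    (hslice : ∀ (k : Fin d) (ik : Fin (m k)),
      ∃ i : (j : Fin d) → Fin (m j), i k = ik ∧ B i ≠ 0)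
    (s : (k : Fin d) → Fin (m k) → ℝ) (hs : ∀ k i, 0 < s k i)
    (hcompat : ∀ k l : Fin d, ∑ i, s k i = ∑ i, s l i) :
    ∀ x ∈ V0perp B s,
      (∀ j : Fin d,
        ‖Submodule.orthogonalProjectionOnto (Lblock s j) (gradient (fhat B) x)‖ ≤
          ‖Submodule.orthogonalProjectionOnto (Wsub B s j)
            ((Submodule.orthogonalProjectionOnto (V0perp B s) (gradient (fhat B) x) :
              EuclideanSpace ℝ ((k : Fin d) × Fin (m k))))‖) ∧
      ‖(Submodule.orthogonalProjectionOnto (V0perp B s) (gradient (fhat B) x) :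
            EuclideanSpace ℝ ((k : Fin d) × Fin (m k)))‖ ^ 2 ≤
        ∑ j : Fin d,
          ‖Submodule.orthogonalProjectionOnto (Wsub B s j)
            ((Submodule.orthogonalProjectionOnto (V0perp B s) (gradient (fhat B) x) :
              EuclideanSpace ℝ ((k : Fin d) × Fin (m k))))‖ ^ 2 :=
  block_gradient_bounds_general B hB s

end
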